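/- For α ∈ (2,3], the function h_α(z) = (z^α − 1 − α(z−1))/(z−1)² (using the principal branch of z^α, extended continuously at z = 0 by h_α(0) = α and at z = 1 by h_α(1) = α(α−1)/2) has no zeros in the slit plane ℂ ∖ (−∞, 0). -/

import Mathlib

open Classical in
/-- h_α(z) = (z^α − 1 − α(z−1))/(z−1)², extended continuously at z = 1 and z = 0. -/
noncomputable def halpha (α : ℝ) (z : ℂ) : ℂ :=
  if z = 1 then ((α * (α - 1) / 2 : ℝ) : ℂ)
  else if z = 0 then (α : ℂ)
  else (z ^ (α : ℂ) - 1 - (α : ℂ) * (z - 1)) / (z - 1) ^ 2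

/-!
Write `w t = 1 + t (z - 1)` for the segment from `1` to `z`. Taylor's formula with integral
remainder gives `z^α - 1 - α (z - 1) = α (α - 1) (z - 1)² ∫₀¹ (1 - t) (w t)^(α - 2) dt`.
Since `arg (w t)` lies between `0` and `arg z`, multiplying the integrand by
`exp (-i (α - 2) arg z / 2)` leaves it with argument at most `(α - 2) |arg z| / 2 < π / 2` in
absolute value, so its real part is positive and the integral cannot vanish.
-/

open Complex Set ComplexConjugate intervalIntegral

lemma one_add_mul_sub_one_mem_slitPlane {z : ℂ} (hz : z ∈ slitPlane) {t : ℝ}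
    (ht : t ∈ Icc (0 : ℝ) 1) : 1 + t * (z - 1) ∈ slitPlane := by
  simpa [real_smul] using
    starConvex_one_slitPlane.add_smul_mem (y := z - 1) (by simpa using hz) ht.1 ht.2

lemma continuousOn_one_sub_mul_cpow (a : ℂ) {z : ℂ} (hz : z ∈ slitPlane) :
    ContinuousOn (fun t : ℝ => (1 - t) * (1 + t * (z - 1)) ^ a) (Icc 0 1) :=
  (by fun_prop : Continuous fun t : ℝ => 1 - (t : ℂ)).continuousOn.mul <|
    (by fun_prop : Continuous fun t : ℝ => 1 + t * (z - 1)).continuousOn.cpow_const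
      fun _ ht => one_add_mul_sub_one_mem_slitPlane hz ht

lemma cpow_sub_one_sub_mul_eq_integral (a : ℂ) {z : ℂ} (hz : z ∈ slitPlane) :
    z ^ a - 1 - a * (z - 1) =
      a * (a - 1) * (z - 1) ^ 2 * ∫ t in (0 : ℝ)..1, (1 - t) * (1 + t * (z - 1)) ^ (a - 2) := by
  set w : ℝ → ℂ := fun t => 1 + t * (z - 1)
  have hw : ∀ t, HasDerivAt w (z - 1) t := fun t => by
    simpa [w] using ((hasDerivAt_id (t : ℂ)).comp_ofReal.mul_const (z - 1)).const_add 1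
  have hF : ∀ t ∈ uIcc (0 : ℝ) 1, HasDerivAt
      (fun t : ℝ => (1 - t) * (a * (z - 1)) * w t ^ (a - 1) + w t ^ a)
      (a * (a - 1) * (z - 1) ^ 2 * ((1 - t) * w t ^ (a - 2))) t := by
    intro t ht
    rw [uIcc_of_le zero_le_one] at ht
    have hcpow (b : ℂ) := ((hasStrictDerivAt_cpow_const (c := b)
      (one_add_mul_sub_one_mem_slitPlane hz ht)).hasDerivAt.comp t (hw t))
    have hlin : HasDerivAt (fun t : ℝ => (1 - (t : ℂ)) * (a * (z - 1))) (-(a * (z - 1))) t := by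
      simpa [w] using ((hasDerivAt_id (t : ℂ)).comp_ofReal.const_sub 1).mul_const (a * (z - 1))
    refine ((hlin.mul (hcpow (a - 1))).add (hcpow a)).congr_deriv ?_
    simp only [Function.comp_def, w, show a - 1 - 1 = a - 2 by ring]
    ring
  rw [← integral_const_mul, integral_eq_sub_of_hasDerivAt hF
    ((continuousOn_const.mul (continuousOn_one_sub_mul_cpow _ hz)).intervalIntegrable_of_Icc
      zero_le_one)]
  simp only [w, ofReal_one, ofReal_zero, sub_self, zero_mul, one_mul, add_sub_cancel, zero_add,
    add_zero, one_cpow]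
  ring

lemma arg_le_arg_of_im_mul_re_le {z w : ℂ} (hz : z ≠ 0) (hzim : 0 ≤ z.im) (hw : w ≠ 0)
    (hwarg : w.arg < Real.pi) (hcross : w.im * z.re ≤ w.re * z.im) : w.arg ≤ z.arg := by
  by_contra! hlt
  -- `sin (arg w - arg z) = (w.im * z.re - w.re * z.im) / (‖w‖ * ‖z‖)`
  have hsin : 0 < Real.sin (w.arg - z.arg) :=
    Real.sin_pos_of_pos_of_lt_pi (sub_pos.mpr hlt) (by linarith [arg_nonneg_iff.mpr hzim])
  rw [Real.sin_sub, sin_arg, cos_arg hw, sin_arg, cos_arg hz,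
    div_mul_div_comm, div_mul_div_comm, ← sub_div] at hsin
  exact (div_pos_iff_of_pos_right (by positivity)).mp hsin |>.not_ge (by linarith)

lemma arg_one_add_mul_sub_one_mem_Icc {z : ℂ} (hz : z ∈ slitPlane) (hzim : 0 ≤ z.im) {t : ℝ}
    (ht : t ∈ Icc (0 : ℝ) 1) : arg (1 + t * (z - 1)) ∈ Icc 0 (arg z) := by
  have hw := one_add_mul_sub_one_mem_slitPlane hz ht
  have hwim : (1 + t * (z - 1)).im = t * z.im := by simp
  refine ⟨arg_nonneg_iff.mpr (hwim ▸ mul_nonneg ht.1 hzim), ?_⟩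
  refine arg_le_arg_of_im_mul_re_le (slitPlane_ne_zero hz) hzim (slitPlane_ne_zero hw)
    ((arg_le_pi _).lt_of_ne (slitPlane_arg_ne_pi hw)) ?_
  simp only [add_re, add_im, one_re, one_im, mul_re, mul_im, ofReal_re, ofReal_im, sub_re,
    sub_im]
  nlinarith [ht.2]

lemma arg_one_add_mul_sub_one_mem_uIcc {z : ℂ} (hz : z ∈ slitPlane) {t : ℝ}
    (ht : t ∈ Icc (0 : ℝ) 1) : arg (1 + t * (z - 1)) ∈ uIcc 0 (arg z) := by
  rcases le_or_gt 0 z.im with hzim | hzim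
  · exact Icc_subset_uIcc (arg_one_add_mul_sub_one_mem_Icc hz hzim ht)
  · have hconj := arg_one_add_mul_sub_one_mem_Icc (z := conj z)
      (by simpa [mem_slitPlane_iff] using hz) (by simpa using hzim.le) ht
    have hw := one_add_mul_sub_one_mem_slitPlane hz ht
    rw [show 1 + t * (conj z - 1) = conj (1 + t * (z - 1)) by simp, arg_conj, arg_conj,
      if_neg (slitPlane_arg_ne_pi hw), if_neg (slitPlane_arg_ne_pi hz)] at hconj
    exact Icc_subset_uIcc' ⟨by linarith [hconj.2], by linarith [hconj.1]⟩

lemma abs_sub_half_le_of_mem_uIcc {a b : ℝ} (h : b ∈ uIcc 0 a) : |b - a / 2| ≤ |a| / 2 := by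
  rcases le_total 0 a with ha | ha
  · rw [uIcc_of_le ha] at h
    rw [abs_of_nonneg ha, abs_le]; constructor <;> linarith [h.1, h.2]
  · rw [uIcc_of_ge ha] at h
    rw [abs_of_nonpos ha, abs_le]; constructor <;> linarith [h.1, h.2]

lemma re_exp_mul_cpow_one_add_mul_sub_one_pos {z : ℂ} (hz : z ∈ slitPlane) {s : ℝ}
    (hs : |s| ≤ 1) {t : ℝ} (ht : t ∈ Icc (0 : ℝ) 1) :
    0 < (exp (-(s * arg z / 2 : ℝ) * I) * (1 + t * (z - 1)) ^ (s : ℂ)).re := by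
  set w := 1 + t * (z - 1)
  have hw : w ≠ 0 := slitPlane_ne_zero (one_add_mul_sub_one_mem_slitPlane hz ht)
  have hargz : |arg z| < Real.pi :=
    abs_lt.mpr ⟨neg_pi_lt_arg z, (arg_le_pi z).lt_of_ne (slitPlane_arg_ne_pi hz)⟩
  have hangle : |s * (arg w - arg z / 2)| < Real.pi / 2 := by
    rw [abs_mul]
    calc |s| * |arg w - arg z / 2| ≤ 1 * (|arg z| / 2) :=
          mul_le_mul hs (abs_sub_half_le_of_mem_uIcc (arg_one_add_mul_sub_one_mem_uIcc hz ht))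
            (abs_nonneg _) zero_le_one
      _ < Real.pi / 2 := by linarith
  rw [cpow_def_of_ne_zero hw, ← exp_add, exp_re]
  refine mul_pos (Real.exp_pos _) (Real.cos_pos_of_mem_Ioo ?_)
  have him : (-(s * arg z / 2 : ℝ) * I + log w * s).im = s * (arg w - arg z / 2) := by
    simp only [add_im, mul_im, neg_re, neg_im, ofReal_re, ofReal_im, I_re, I_im, log_re, log_im]
    ring
  rw [him]
  exact ⟨by linarith [neg_abs_le (s * (arg w - arg z / 2))],
    lt_of_le_of_lt (le_abs_self _) hangle⟩

lemma intervalIntegral_ne_zero_of_re_mul_pos {f : ℝ → ℂ} {a b : ℝ} (hab : a < b)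
    (hf : ContinuousOn f (Icc a b)) (c : ℂ) (hpos : ∀ t ∈ Ioo a b, 0 < (c * f t).re) :
    ∫ t in a..b, f t ≠ 0 := by
  have hcf : ContinuousOn (fun t => c * f t) (uIcc a b) := by
    rw [uIcc_of_le hab.le]; exact continuousOn_const.mul hf
  have hre : 0 < ∫ t in a..b, (c * f t).re :=
    intervalIntegral_pos_of_pos_on (continuous_re.comp_continuousOn hcf).intervalIntegrable
      hpos hab
  have hcomm :=
    reCLM.intervalIntegral_comp_comm (hcf.intervalIntegrable (μ := MeasureTheory.volume))
  simp only [reCLM_apply, integral_const_mul] at hcomm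
  intro h
  rw [hcomm, h, mul_zero, zero_re] at hre
  exact hre.false

lemma integral_one_sub_mul_cpow_ne_zero {z : ℂ} (hz : z ∈ slitPlane) {s : ℝ}
    (hs : |s| ≤ 1) :
    ∫ t in (0 : ℝ)..1, (1 - t) * (1 + t * (z - 1)) ^ (s : ℂ) ≠ 0 := by
  refine intervalIntegral_ne_zero_of_re_mul_pos one_pos (continuousOn_one_sub_mul_cpow _ hz)
    (exp (-(s * arg z / 2 : ℝ) * I)) fun t ht => ?_
  rw [mul_left_comm, ← ofReal_one, ← ofReal_sub, re_ofReal_mul]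
  exact mul_pos (sub_pos.mpr ht.2)
    (re_exp_mul_cpow_one_add_mul_sub_one_pos hz hs ⟨ht.1.le, ht.2.le⟩)

/-- for α ∈ (2,3], h_α has no zeros in the slit plane ℂ ∖ (−∞,0). -/
theorem stmt8 (α : ℝ) (hα : α ∈ Set.Ioc (2 : ℝ) 3) (z : ℂ)
    (hz : ¬(z.im = 0 ∧ z.re < 0)) : halpha α z ≠ 0 := by
  obtain ⟨hα2, hα3⟩ := hα
  have hα0 : (α : ℂ) ≠ 0 := ofReal_ne_zero.mpr (by linarith)
  have hα1 : (α : ℂ) - 1 ≠ 0 := sub_ne_zero.mpr (ofReal_ne_one.mpr (by linarith))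
  unfold halpha
  split_ifs with h1 h0
  · exact ofReal_ne_zero.mpr (by nlinarith)
  · exact hα0
  have hzs : z ∈ slitPlane := by
    rw [mem_slitPlane_iff]
    by_contra! h
    exact hz ⟨h.2, h.1.lt_of_ne fun hre => h0 (ext hre h.2)⟩
  have hz1 : z - 1 ≠ 0 := sub_ne_zero.mpr h1
  have hI := integral_one_sub_mul_cpow_ne_zero hzs (s := α - 2)
    (abs_le.mpr ⟨by linarith, by linarith⟩)
  push_cast at hI
  rw [cpow_sub_one_sub_mul_eq_integral _ hzs]
  exact div_ne_zero (mul_ne_zero (by simp [hα0, hα1, hz1]) hI) (pow_ne_zero 2 hz1)
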